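/- For any n, Σ_{k=0}^{n} C(n,k) 2^{k(n−k)} R_k is divisible-compatible so that (Σ_{k=0}^{n} C(n,k) 2^{k(n−k)} R_k) · Π_{i=0}^{n−1} (2^n − 2^i) is divisible by 2^n · n!, where R_k is the number of k×k matrices over ℤ/2 all of whose principal minors are 1. -/

import Mathlib

/-!
Over `ℤ/2` the transpose is an involution on the matrices all of whose principal minors are `1`,
and its only fixed point is the identity (a symmetric such matrix has unit diagonal, and each
`2 × 2` minor `1 - a²` forces `a = 0`); hence `R_k` is odd. The permutation matrices embed `Sₙ`
into `GL(n, ℤ/2)`, so `n!` divides `∏ (2ⁿ - 2ⁱ)`, whose `2`-adic valuation `n(n-1)/2` is at least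
`n + v₂(n!)` as soon as `n ≥ 5`. The cases `n ≤ 4` follow from the parity of the `R_k` and `R_2 = 3`.
-/

open Matrix

/-- The principal minor of `A` indexed by the subset `s` (rows and columns). -/
def pminor {m : Type*} [Fintype m] [DecidableEq m] {R : Type*} [CommRing R]
    (A : Matrix m m R) (s : Finset m) : R :=
  (A.submatrix (fun i : s => (i : m)) (fun j : s => (j : m))).det

/-- `R k` = number of `k × k` matrices over `ZMod 2` all of whose principal minors are 1. -/
noncomputable def numPM (k : ℕ) : ℕ :=
  Nat.card {A : Matrix (Fin k) (Fin k) (ZMod 2) // ∀ s : Finset (Fin k), pminor A s = 1}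

open Nat

section Pminor

variable {m : Type*} [Fintype m] [DecidableEq m] {R : Type*} [CommRing R]

lemma pminor_transpose (A : Matrix m m R) (s : Finset m) : pminor Aᵀ s = pminor A s :=
  det_transpose _

lemma pminor_one (s : Finset m) : pminor (1 : Matrix m m R) s = 1 := by
  rw [pminor, submatrix_one _ Subtype.coe_injective, det_one]

lemma pminor_singleton (A : Matrix m m R) (i : m) : pminor A {i} = A i i := by
  simp [pminor, det_unique]

lemma pminor_pair (A : Matrix m m R) {i j : m} (h : i ≠ j) :
    pminor A {i, j} = A i i * A j j - A i j * A j i := by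
  have hi : i ∈ ({i, j} : Finset m) := by simp
  have hj : j ∈ ({i, j} : Finset m) := by simp
  let e : Fin 2 ≃ ({i, j} : Finset m) :=
    { toFun := ![⟨i, hi⟩, ⟨j, hj⟩]
      invFun := fun y => if (y : m) = i then 0 else 1
      left_inv := fun x => by fin_cases x <;> simp [h.symm]
      right_inv := fun ⟨y, hy⟩ => by
        rcases Finset.mem_insert.mp hy with rfl | hy
        · simp
        · obtain rfl := Finset.mem_singleton.mp hy
          simp [h.symm] }
  rw [pminor, ← det_submatrix_equiv_self e, submatrix_submatrix, det_fin_two]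
  simp [e]

theorem eq_one_of_transpose_eq_of_forall_pminor_eq_one [NoZeroDivisors R] {A : Matrix m m R}
    (hA : Aᵀ = A) (h : ∀ s, pminor A s = 1) : A = 1 := by
  ext i j
  have hii : A i i = 1 := pminor_singleton A i ▸ h {i}
  by_cases hij : i = j
  · subst hij
    simp [hii]
  · have hjj : A j j = 1 := pminor_singleton A j ▸ h {j}
    have hji : A j i = A i j := congrFun (congrFun hA i) j
    have hpair := h {i, j}
    rw [pminor_pair A hij, hii, hjj, hji, one_mul, sub_eq_self, mul_self_eq_zero] at hpair
    simp [hpair, one_apply_ne hij]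

end Pminor

theorem numPM_odd (k : ℕ) : Odd (numPM k) := by
  classical
  let T := {A : Matrix (Fin k) (Fin k) (ZMod 2) // ∀ s, pminor A s = 1}
  let f : Function.End T := fun A => ⟨A.1ᵀ, fun s => (pminor_transpose A.1 s).trans (A.2 s)⟩
  have hf : f ^ 2 ^ 1 = 1 := funext fun A => Subtype.ext A.1.transpose_transpose
  have hfix : Fintype.card f.fixedPoints = 1 :=
    Fintype.card_eq_one_iff.mpr ⟨⟨⟨1, pminor_one⟩, Subtype.ext transpose_one⟩, fun ⟨A, hA⟩ =>
      Subtype.ext <| Subtype.ext <|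
        eq_one_of_transpose_eq_of_forall_pminor_eq_one (congrArg Subtype.val hA) A.2⟩
  have hmod := Equiv.Perm.card_fixedPoints_modEq hf
  rw [hfix] at hmod
  rw [numPM, Nat.card_eq_fintype_card, Nat.odd_iff]
  exact hmod

theorem numPM_zero : numPM 0 = 1 := by
  rw [numPM, Nat.card_eq_fintype_card]
  decide

theorem numPM_two : numPM 2 = 3 := by
  rw [numPM, Nat.card_eq_fintype_card]
  decide

theorem Matrix.permMatrixHom_injective {n R : Type*} [DecidableEq n] [Fintype n]
    [NonAssocSemiring R] [Nontrivial R] :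
    Function.Injective (permMatrixHom : Equiv.Perm n →* Matrix n n R) := by
  intro σ τ h
  rw [← _root_.inv_inj]
  ext x
  simpa using congrArg (fun f : n ≃. n => f x) (PEquiv.toMatrix_injective h)

theorem factorial_dvd_card_GL (n : ℕ) (R : Type*) [CommRing R] [Nontrivial R] :
    n ! ∣ Nat.card (GL (Fin n) R) := by
  have := Subgroup.card_dvd_of_injective
    (permMatrixHom : Equiv.Perm (Fin n) →* Matrix (Fin n) (Fin n) R).toHomUnits
    (fun _ _ h => permMatrixHom_injective (congrArg Units.val h))
  rwa [Nat.card_perm, Nat.card_fin] at this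

theorem factorial_dvd_prod_pow_sub_pow (n : ℕ) (𝔽 : Type*) [Field 𝔽] [Fintype 𝔽] :
    n ! ∣ ∏ i ∈ Finset.range n, (Fintype.card 𝔽 ^ n - Fintype.card 𝔽 ^ i) := by
  simpa [card_GL_field,
    Fin.prod_univ_eq_prod_range (fun i => Fintype.card 𝔽 ^ n - Fintype.card 𝔽 ^ i)]
    using factorial_dvd_card_GL n 𝔽

theorem pow_sum_range_dvd_prod_pow_sub_pow (q n : ℕ) :
    q ^ (∑ i ∈ Finset.range n, i) ∣ ∏ i ∈ Finset.range n, (q ^ n - q ^ i) := by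
  rw [← Finset.prod_pow_eq_pow_sum]
  exact Finset.prod_dvd_prod_of_dvd _ _ fun i hi =>
    Nat.dvd_sub (pow_dvd_pow q (Finset.mem_range.mp hi).le) dvd_rfl

theorem Nat.pow_mul_dvd_of_dvd_of_pow_add_factorization_dvd {p k a x : ℕ} (hp : p.Prime)
    (ha : a ∣ x) (hpx : p ^ (k + a.factorization p) ∣ x) : p ^ k * a ∣ x := by
  rcases eq_or_ne a 0 with rfl | ha0
  · simpa using ha
  have hcop : Coprime (p ^ (k + a.factorization p)) (a / p ^ a.factorization p) :=
    Coprime.pow_left _ (coprime_ordCompl hp ha0)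
  calc p ^ k * a = p ^ (k + a.factorization p) * (a / p ^ a.factorization p) := by
        rw [pow_add, mul_assoc, ordProj_mul_ordCompl_eq_self]
    _ ∣ x := hcop.mul_dvd_of_dvd_of_dvd hpx ((ordCompl_dvd a p).trans ha)

theorem two_pow_mul_factorial_dvd_prod {n : ℕ} (hn : 5 ≤ n) :
    2 ^ n * n ! ∣ ∏ i ∈ Finset.range n, (2 ^ n - 2 ^ i) := by
  refine pow_mul_dvd_of_dvd_of_pow_add_factorization_dvd prime_two
    (by simpa using factorial_dvd_prod_pow_sub_pow n (ZMod 2))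
    ((pow_dvd_pow 2 ?_).trans (pow_sum_range_dvd_prod_pow_sub_pow 2 n))
  have hv : (n !).factorization 2 ≤ n := by
    have := sub_one_mul_padicValNat_factorial (p := 2) n
    rw [factorization_def _ prime_two]
    omega
  have hsum := Finset.sum_range_id_mul_two n
  have : n * 4 ≤ n * (n - 1) := Nat.mul_le_mul_left n (by omega)
  omega

theorem stmt_12 (n : ℕ) :
    (2 ^ n * n.factorial) ∣
      (∑ k ∈ Finset.range (n + 1), n.choose k * 2 ^ (k * (n - k)) * numPM k) *
        ∏ i ∈ Finset.range n, (2 ^ n - 2 ^ i) := by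
  rcases Nat.lt_or_ge n 5 with hn | hn
  · obtain ⟨a, ha⟩ := numPM_odd 1
    obtain ⟨b, hb⟩ := numPM_odd 3
    obtain ⟨c, hc⟩ := numPM_odd 4
    interval_cases n <;>
      norm_num [Finset.sum_range_succ, Finset.prod_range_succ, numPM_zero, numPM_two,
        Nat.factorial, Nat.choose] <;>
      omega
  · exact (two_pow_mul_factorial_dvd_prod hn).mul_left _
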